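/- arXiv:1710.00867 — 3 statements merged into one kernel-verified Lean document; each statement's English description precedes it below -/
import Mathlib

section
/- Let $P_c$ be a finite set of points with timestamps, $a \in (0,1)$, $\lambda > 0$, and $\rho_c^t = \sum_{p_i \in P_c} a^{\lambda(t - t_i)}$ the timely density. Suppose the cluster-cell absorbs exactly one new point with timestamp $t_{j+1}$ between times $t_j$ and $t_{j+1}$ (with $t_j \le t_{j+1}$), so its point set becomes $P_c \cup \{p\}$ with $p \notin P_c$ and timestamp $t_{j+1}$. Then its density at time $t_{j+1}$, computed over the enlarged point set, satisfies $\rho_c^{t_{j+1}} = a^{\lambda(t_{j+1} - t_j)} \cdot \rho_c^{t_j} + 1$. -/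
/-- Density update after absorbing one new point with timestamp `t_{j+1}`:
`ρ_c^{t_{j+1}} = a ^ (λ (t_{j+1} - t_j)) * ρ_c^{t_j} + 1`. -/
theorem timely_density_update_absorb {ι : Type*} [DecidableEq ι] (P : Finset ι) (ts : ι → ℝ)
    (p : ι) (hp : p ∉ P) (a lam tj tj1 : ℝ)
    (ha0 : 0 < a) (ha1 : a < 1) (hlam : 0 < lam) (ht : tj ≤ tj1)
    (htp : ts p = tj1) :
    ∑ i ∈ insert p P, a ^ (lam * (tj1 - ts i)) =
      a ^ (lam * (tj1 - tj)) * (∑ i ∈ P, a ^ (lam * (tj - ts i))) + 1 := by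
  rw [Finset.sum_insert hp, htp, sub_self, mul_zero, Real.rpow_zero,
    Finset.mul_sum, add_comm]
  congr 1
  refine Finset.sum_congr rfl fun i _ => ?_
  rw [← Real.rpow_add ha0]
  ring_nf
end

section
/- (Density Filter) Let $C$ be a finite collection of cluster-cells with density functions $\rho, \rho' : C \to \mathbb{R}$ at times $t_j$ and $t_{j+1}$, and suppose only the cluster-cell $c' \in C$ absorbs a point: there is $s > 0$ with $\rho'(x) = s \cdot \rho(x)$ for every $x \ne c'$, and $\rho'(c') = s \cdot \rho(c') + 1$. Let $c \in C$ with $c \ne c'$. If $\rho(c) < \rho(c')$ or $\rho'(c) \ge \rho'(c')$, then the set of cluster-cells with density strictly higher than $c$ is unchanged, i.e., $\{x \in C : \rho(c) < \rho(x)\} = \{x \in C : \rho'(c) < \rho'(x)\}$; consequently, when cells lie in a metric space with seed points $s_x$, the dependent distance $\delta_c = \min \{\,d(s_c, s_x) : x \in C,\ \rho(c) < \rho(x)\,\}$ of $c$ is the same at both times. -/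
/-- (Density Filter) If only cluster-cell `c'` absorbs a point (all densities
are scaled by a common factor `s > 0` and `c'` additionally gains `+1`), and
either `ρ c < ρ c'` or `ρ' c ≥ ρ' c'` holds, then the set of cluster-cells
with density strictly higher than `c` is unchanged, and consequently the
dependent distance of `c` is unchanged. -/
theorem density_filter {ι : Type*} [DecidableEq ι] {X : Type*} [MetricSpace X]
    (C : Finset ι) (sd : ι → X) (ρ ρ' : ι → ℝ) (s : ℝ) (hs : 0 < s)
    (c' : ι) (hc' : c' ∈ C)
    (hothers : ∀ x, x ≠ c' → ρ' x = s * ρ x)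
    (habsorb : ρ' c' = s * ρ c' + 1)
    (c : ι) (hc : c ∈ C) (hcc' : c ≠ c')
    (hfilter : ρ c < ρ c' ∨ ρ' c' ≤ ρ' c) :
    (C.filter fun x => ρ c < ρ x) = (C.filter fun x => ρ' c < ρ' x) ∧
    ∀ (h : (C.filter fun x => ρ c < ρ x).Nonempty)
      (h' : (C.filter fun x => ρ' c < ρ' x).Nonempty),
      (C.filter fun x => ρ c < ρ x).inf' h (fun x => dist (sd c) (sd x)) =
        (C.filter fun x => ρ' c < ρ' x).inf' h' (fun x => dist (sd c) (sd x)) := by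
  have hρ'c : ρ' c = s * ρ c := hothers c hcc'
  have key : (C.filter fun x => ρ c < ρ x) = (C.filter fun x => ρ' c < ρ' x) := by
    apply Finset.filter_congr
    intro x hx
    by_cases hx' : x = c'
    · subst hx'
      simp only [habsorb, hρ'c]
      constructor
      · intro h
        nlinarith
      · intro h
        rcases hfilter with h1 | h2
        · exact h1
        · exfalso; rw [habsorb, hρ'c] at h2; linarith
    · rw [hothers x hx', hρ'c]
      exact (mul_lt_mul_iff_right₀ hs).symm
  refine ⟨key, fun h h' => ?_⟩
  congr 1
end

section
/- Let $0 < a < 1$, $\lambda > 0$, $v > 0$, $\beta > 0$, and define $\log_a x = \ln x / \ln a$. A cluster-cell whose density equals the activity threshold $\frac{\beta v}{1 - a^{\lambda}}$ decays (without absorbing any point) to a density below $1$ after time $\Delta T$, i.e. $\frac{\beta v}{1 - a^{\lambda}} \cdot a^{\lambda v \Delta T} < 1$, if and only if $\Delta T > \dfrac{\log_a(1 - a^{\lambda}) - \log_a(\beta v)}{\lambda v}$. -/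
/-- A cluster-cell at the activity threshold `β v / (1 - a ^ λ)` decays below
density `1` after time `ΔT` if and only if
`ΔT > (log_a (1 - a ^ λ) - log_a (β v)) / (λ v)`,
where `log_a x = ln x / ln a`. -/
theorem outdated_time_bound (a lam v β ΔT : ℝ)
    (ha0 : 0 < a) (ha1 : a < 1) (hlam : 0 < lam) (hv : 0 < v) (hβ : 0 < β) :
    (β * v / (1 - a ^ lam)) * a ^ (lam * v * ΔT) < 1 ↔
      ΔT > (Real.log (1 - a ^ lam) / Real.log a
              - Real.log (β * v) / Real.log a) / (lam * v) := by
  have hL : Real.log a < 0 := Real.log_neg ha0 ha1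
  have halam : a ^ lam < 1 := Real.rpow_lt_one ha0.le ha1 hlam
  have h1 : 0 < 1 - a ^ lam := by linarith
  have hβv : 0 < β * v := mul_pos hβ hv
  have hpow : 0 < a ^ (lam * v * ΔT) := Real.rpow_pos_of_pos ha0 _
  have hlhs : 0 < (β * v / (1 - a ^ lam)) * a ^ (lam * v * ΔT) :=
    mul_pos (div_pos hβv h1) hpow
  rw [← Real.log_lt_log_iff hlhs one_pos, Real.log_one,
    Real.log_mul (by positivity) hpow.ne', Real.log_div hβv.ne' h1.ne',
    Real.log_rpow ha0]
  rw [gt_iff_lt, div_lt_iff₀ (mul_pos hlam hv), div_sub_div_same,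
    div_lt_iff_of_neg hL]
  constructor <;> intro h <;> nlinarith
end
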